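/- arXiv:2110.01782 — 2 statements merged into one kernel-verified Lean document; each statement's English description precedes it below -/
import Mathlib

section
/- For n ≥ 5, the normal closure in B'_n of the element σ_2σ_1^{-1} is all of B'_n. -/
/-- Relators of the Artin presentation of the braid group on `n` strands.
Generator `i : Fin (n-1)` corresponds to the Artin generator `σ_{i+1}`. -/
def braidRels (n : ℕ) : Set (FreeGroup (Fin (n - 1))) :=
  {r | (∃ i j : Fin (n - 1), (i : ℕ) + 1 = (j : ℕ) ∧
          r = .of i * .of j * .of i * (.of j * .of i * .of j)⁻¹) ∨
       (∃ i j : Fin (n - 1), (i : ℕ) + 2 ≤ (j : ℕ) ∧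
          r = .of i * .of j * (.of j * .of i)⁻¹)}

/-- The braid group on `n` strands. -/
def BraidGroup (n : ℕ) : Type := PresentedGroup (braidRels n)

instance (n : ℕ) : Group (BraidGroup n) := by unfold BraidGroup; infer_instance

/-- `sig n i` is the Artin generator `σ_i` (1-based: `1 ≤ i ≤ n-1`), and `1` otherwise. -/
def sig (n : ℕ) (i : ℕ) : BraidGroup n :=
  if h : 1 ≤ i ∧ i ≤ n - 1 then PresentedGroup.of ⟨i - 1, by omega⟩ else 1

/-- The exponent sum homomorphism `B_n → ℤ`, sending each Artin generator to `1`. -/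
def expSum (n : ℕ) : BraidGroup n →* Multiplicative ℤ :=
  PresentedGroup.toGroup (f := fun _ : Fin (n - 1) => Multiplicative.ofAdd (1 : ℤ))
    (by
      rintro r (⟨i, j, -, rfl⟩ | ⟨i, j, -, rfl⟩) <;>
        simp only [map_mul, map_inv, FreeGroup.lift_apply_of] <;> group)

/-- The Birman–Ko–Lee generator `ρ_{ij}`:
the half twist `(σ_{j-1} ⋯ σ_{i+1}) σ_i (σ_{j-1} ⋯ σ_{i+1})⁻¹`. -/
def rho (n i j : ℕ) : BraidGroup n :=
  (((List.range' (i + 1) (j - 1 - i)).reverse.map (sig n)).prod) * sig n i *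
    (((List.range' (i + 1) (j - 1 - i)).reverse.map (sig n)).prod)⁻¹

/-- The normal closure of `x` in the subgroup `H`. -/
def nclIn {G : Type*} [Group G] (H : Subgroup G) (x : G) : Subgroup G :=
  Subgroup.closure {y | ∃ g ∈ H, y = g * x * g⁻¹}

/-!
Let `N` be the normal closure of `x = σ₂σ₁⁻¹` in `B'ₙ`. Conjugation by `B'ₙ` preserves `N`, and
so does conjugation by `σ₁`: for `n ≥ 5`, `σ₄` commutes with `x` and `σ₁σ₄⁻¹ ∈ B'ₙ`, so `σ₁xσ₁⁻¹`
is a `B'ₙ`-conjugate of `x`. Since `Bₙ` is generated by `B'ₙ` and `σ₁`, `N` is normal in `Bₙ`.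
In `Bₙ / N` we have `σ₂ = σ₁`, and the braid relations then give every `σᵢ` the image of `σ₁`;
so `Bₙ / N` is cyclic, hence abelian, and `B'ₙ ≤ N`.
-/

section NormalClosureIn

variable {G : Type*} [Group G]

lemma conj_mem_closure_of_forall {S : Set G} {g : G}
    (hS : ∀ s ∈ S, g * s * g⁻¹ ∈ Subgroup.closure S) {y : G} (hy : y ∈ Subgroup.closure S) :
    g * y * g⁻¹ ∈ Subgroup.closure S := by
  have hmap : (Subgroup.closure S).map (MulAut.conj g).toMonoidHom ≤ Subgroup.closure S := by
    rw [MonoidHom.map_closure, Subgroup.closure_le]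
    rintro _ ⟨s, hs, rfl⟩
    exact hS s hs
  exact hmap ⟨y, hy, rfl⟩

variable {H : Subgroup G} {x : G}

lemma conj_mem_nclIn {g : G} (hg : g ∈ H) : g * x * g⁻¹ ∈ nclIn H x :=
  Subgroup.subset_closure ⟨g, hg, rfl⟩

lemma mem_nclIn_self : x ∈ nclIn H x := by
  simpa using conj_mem_nclIn (H := H) (x := x) (one_mem H)

lemma nclIn_le (hx : x ∈ H) : nclIn H x ≤ H := by
  refine (Subgroup.closure_le _).2 ?_
  rintro _ ⟨g, hg, rfl⟩
  exact mul_mem (mul_mem hg hx) (inv_mem hg)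

lemma conj_mem_nclIn_of_mem {g y : G} (hg : g ∈ H) (hy : y ∈ nclIn H x) :
    g * y * g⁻¹ ∈ nclIn H x := by
  refine conj_mem_closure_of_forall ?_ hy
  rintro _ ⟨k, hk, rfl⟩
  show _ ∈ nclIn H x
  simpa only [mul_assoc, mul_inv_rev] using conj_mem_nclIn (x := x) (mul_mem hg hk)

lemma conj_mem_nclIn_of_conj_self_mem [H.Normal] {g y : G} (hgx : g * x * g⁻¹ ∈ nclIn H x)
    (hy : y ∈ nclIn H x) : g * y * g⁻¹ ∈ nclIn H x := by
  refine conj_mem_closure_of_forall ?_ hy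
  rintro _ ⟨k, hk, rfl⟩
  show _ ∈ nclIn H x
  have hgk : g * k * g⁻¹ ∈ H := Subgroup.Normal.conj_mem inferInstance k hk g
  simpa only [mul_assoc, mul_inv_rev, inv_inv, inv_mul_cancel_left] using
    conj_mem_nclIn_of_mem hgk hgx

lemma mem_normalizer_nclIn [H.Normal] {g : G} (h₁ : g * x * g⁻¹ ∈ nclIn H x)
    (h₂ : g⁻¹ * x * g ∈ nclIn H x) : g ∈ Subgroup.normalizer (nclIn H x : Set G) := by
  refine Subgroup.mem_normalizer_iff.2 fun y => ⟨conj_mem_nclIn_of_conj_self_mem h₁, fun hy => ?_⟩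
  have := conj_mem_nclIn_of_conj_self_mem (g := g⁻¹) (by rwa [inv_inv]) hy
  simpa only [mul_assoc, inv_mul_cancel_left, inv_inv, inv_mul_cancel, mul_one] using this

lemma le_normalizer_nclIn [H.Normal] : H ≤ Subgroup.normalizer (nclIn H x : Set G) :=
  fun g hg => mem_normalizer_nclIn (conj_mem_nclIn hg)
    (by simpa using conj_mem_nclIn (x := x) (inv_mem hg))

lemma conj_mem_nclIn_of_commute {a c : G} (hc : Commute c x) (ha : a * c⁻¹ ∈ H) :
    a * x * a⁻¹ ∈ nclIn H x := by
  have hconj : a * x * a⁻¹ = (a * c⁻¹) * x * (a * c⁻¹)⁻¹ :=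
    calc a * x * a⁻¹ = a * (x * c⁻¹) * c * a⁻¹ := by group
      _ = (a * c⁻¹) * x * (a * c⁻¹)⁻¹ := by rw [← hc.inv_left.eq]; group
  exact hconj ▸ conj_mem_nclIn ha

end NormalClosureIn

section Group

variable {G : Type*} [Group G]

lemma IsConj.mul_inv_mem_commutator {a b : G} (h : IsConj a b) : b * a⁻¹ ∈ commutator G := by
  obtain ⟨c, rfl⟩ := isConj_iff.1 h
  rw [commutator_def, ← commutatorElement_def]
  exact Subgroup.commutator_mem_commutator (Subgroup.mem_top c) (Subgroup.mem_top a)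

lemma eq_of_braid_of_commute {s t : G} (hbraid : s * t * s = t * s * t) (hcomm : Commute s t) :
    s = t := by
  rw [hcomm.eq, mul_assoc, mul_assoc] at hbraid
  exact mul_left_cancel (mul_left_cancel hbraid)

lemma commutator_le_ker_of_map_eq {Q : Type*} [Group Q] {f : G →* Q} {S : Set G}
    (hS : Subgroup.closure S = ⊤) {a : G} (h : ∀ s ∈ S, f s = f a) : commutator G ≤ f.ker := by
  have hrange : ∀ g, f g ∈ Subgroup.zpowers (f a) := by
    have : f.range ≤ Subgroup.zpowers (f a) := by
      rw [MonoidHom.range_eq_map, ← hS, MonoidHom.map_closure, Subgroup.closure_le]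
      rintro _ ⟨s, hs, rfl⟩
      rw [h s hs]
      exact Subgroup.mem_zpowers _
    exact fun g => this ⟨g, rfl⟩
  rw [commutator_def, Subgroup.commutator_le]
  intro g _ k _
  obtain ⟨i, hi⟩ := hrange g
  obtain ⟨j, hj⟩ := hrange k
  rw [MonoidHom.mem_ker, map_commutatorElement, commutatorElement_eq_one_iff_mul_comm, ← hi, ← hj]
  exact (Commute.zpow_zpow_self (f a) i j).eq

end Group

namespace BraidGroup

variable {n : ℕ}

lemma sig_eq_of {k : ℕ} (h₁ : 1 ≤ k) (h₂ : k ≤ n - 1) :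
    sig n k = PresentedGroup.of ⟨k - 1, by omega⟩ :=
  dif_pos ⟨h₁, h₂⟩

lemma closure_range_sig :
    Subgroup.closure (Set.range fun i : Fin (n - 1) => sig n (i + 1)) = ⊤ := by
  have hsig : (fun i : Fin (n - 1) => sig n (i + 1)) = PresentedGroup.of :=
    funext fun i => sig_eq_of (by omega) (by omega)
  rw [hsig]
  exact PresentedGroup.closure_range_of (braidRels n)

lemma sig_braid {i : ℕ} (h₁ : 1 ≤ i) (h₂ : i + 1 ≤ n - 1) :
    sig n i * sig n (i + 1) * sig n i = sig n (i + 1) * sig n i * sig n (i + 1) := by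
  rw [sig_eq_of h₁ (by omega), sig_eq_of (by omega) h₂]
  exact PresentedGroup.mk_eq_mk_of_mul_inv_mem (Or.inl ⟨_, _, by simp; omega, rfl⟩)

lemma sig_commute {i j : ℕ} (h₁ : 1 ≤ i) (h₂ : i + 2 ≤ j) (h₃ : j ≤ n - 1) :
    Commute (sig n i) (sig n j) := by
  rw [sig_eq_of h₁ (by omega), sig_eq_of (by omega) h₃]
  exact PresentedGroup.mk_eq_mk_of_mul_inv_mem (Or.inr ⟨_, _, by simp; omega, rfl⟩)

lemma isConj_sig_succ {i : ℕ} (h₁ : 1 ≤ i) (h₂ : i + 1 ≤ n - 1) :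
    IsConj (sig n i) (sig n (i + 1)) := by
  refine isConj_iff.2 ⟨sig n i * sig n (i + 1), ?_⟩
  rw [sig_braid h₁ h₂]
  group

lemma isConj_sig_one {k : ℕ} (h₁ : 1 ≤ k) (h₂ : k ≤ n - 1) : IsConj (sig n 1) (sig n k) := by
  induction k, h₁ using Nat.le_induction with
  | base => rfl
  | succ k hk ih => exact (ih (by omega)).trans (isConj_sig_succ hk h₂)

lemma sig_mul_inv_sig_mem_commutator {i j : ℕ} (hi₁ : 1 ≤ i) (hi₂ : i ≤ n - 1)
    (hj₁ : 1 ≤ j) (hj₂ : j ≤ n - 1) : sig n i * (sig n j)⁻¹ ∈ commutator (BraidGroup n) :=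
  ((isConj_sig_one hj₁ hj₂).symm.trans (isConj_sig_one hi₁ hi₂)).mul_inv_mem_commutator

lemma map_sig_eq_map_sig_one {Q : Type*} [Group Q] (f : BraidGroup n →* Q)
    (h : f (sig n 2) = f (sig n 1)) {k : ℕ} (h₁ : 1 ≤ k) (h₂ : k ≤ n - 1) :
    f (sig n k) = f (sig n 1) := by
  induction k, h₁ using Nat.le_induction with
  | base => rfl
  | succ k hk ih =>
    obtain rfl | hk₂ := hk.eq_or_lt
    · exact h
    have hbraid := congrArg f (sig_braid hk h₂)
    simp only [map_mul, ih (by omega)] at hbraid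
    exact (eq_of_braid_of_commute hbraid ((sig_commute le_rfl (by omega) h₂).map f)).symm

lemma nclIn_commutator_sig_two_mul_inv_normal (hn : 5 ≤ n) :
    (nclIn (commutator (BraidGroup n)) (sig n 2 * (sig n 1)⁻¹)).Normal := by
  have hc : Commute (sig n 4) (sig n 2 * (sig n 1)⁻¹) :=
    ((sig_commute (i := 2) (by norm_num) le_rfl (by omega)).symm.mul_right
      (sig_commute (i := 1) le_rfl (by norm_num) (by omega)).symm.inv_right)
  have h14 : sig n 1 * (sig n 4)⁻¹ ∈ commutator (BraidGroup n) :=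
    sig_mul_inv_sig_mem_commutator le_rfl (by omega) (by omega) (by omega)
  have h41 : (sig n 1)⁻¹ * sig n 4 ∈ commutator (BraidGroup n) :=
    (Subgroup.commutator_normal ⊤ ⊤).mem_comm
      (sig_mul_inv_sig_mem_commutator (by omega) (by omega) le_rfl (by omega))
  have hσ₁ : sig n 1 ∈ Subgroup.normalizer
      (nclIn (commutator (BraidGroup n)) (sig n 2 * (sig n 1)⁻¹) : Set (BraidGroup n)) :=
    mem_normalizer_nclIn (conj_mem_nclIn_of_commute hc h14)
      (by simpa only [inv_inv] using
        conj_mem_nclIn_of_commute (a := (sig n 1)⁻¹) hc.inv_left (by rwa [inv_inv]))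
  rw [← Subgroup.normalizer_eq_top_iff, eq_top_iff, ← closure_range_sig, Subgroup.closure_le]
  rintro _ ⟨i, rfl⟩
  have hi := sig_mul_inv_sig_mem_commutator (n := n) (i := i + 1) (j := 1) (by omega) (by omega)
    le_rfl (by omega)
  simpa using mul_mem (le_normalizer_nclIn hi) hσ₁

end BraidGroup

/-- For n ≥ 5, the normal closure in B'_n of σ₂σ₁⁻¹ is all of B'_n. -/
theorem normalClosure_sigma21_eq_commutator (n : ℕ) (hn : 5 ≤ n) :
    nclIn (commutator (BraidGroup n)) (sig n 2 * (sig n 1)⁻¹) =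
      commutator (BraidGroup n) := by
  set N := nclIn (commutator (BraidGroup n)) (sig n 2 * (sig n 1)⁻¹)
  have : N.Normal := BraidGroup.nclIn_commutator_sig_two_mul_inv_normal hn
  refine le_antisymm (nclIn_le
    (BraidGroup.sig_mul_inv_sig_mem_commutator (i := 2) (by omega) (by omega) le_rfl (by omega))) ?_
  have h21 : QuotientGroup.mk' N (sig n 2) = QuotientGroup.mk' N (sig n 1) := by
    rw [QuotientGroup.mk'_apply, QuotientGroup.mk'_apply, QuotientGroup.eq_iff_div_mem,
      div_eq_mul_inv]
    exact mem_nclIn_self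
  rw [← QuotientGroup.ker_mk' N]
  refine commutator_le_ker_of_map_eq BraidGroup.closure_range_sig (a := sig n 1) ?_
  rintro _ ⟨i, rfl⟩
  exact BraidGroup.map_sig_eq_map_sig_one _ h21 (by omega) (by omega)
end

section
/- For n ≥ 5, the normal closure in B'_n of the element (σ_2σ_1^{-1})^2 is all of B'_n. Equivalently, any quotient of B'_n in which (σ_2σ_1^{-1})^2 becomes trivial is the trivial group. -/
/-!
Let `N` be the normal closure of `(σ₂σ₁⁻¹)²` in `B_n`. Since `σ₄` commutes with `(σ₂σ₁⁻¹)²`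
and every `σᵢσ₄⁻¹` lies in `B'_n`, conjugating `(σ₂σ₁⁻¹)²` by `B_n` or by `B'_n` gives the same
elements, so its normal closure in `B'_n` is `N`. In `B_n / N` write `a, b, c, d` for the images
of `σ₁, σ₂, σ₃, σ₄`, and `u = ba⁻¹`, `p = ca⁻¹`. Then `u² = 1`, and the braid relations make `u`,
`aua⁻¹` and `a²ua⁻² = u · aua⁻¹` all invert `p`; hence `p² = 1`, `p` commutes with `u`, and
`bcb = cbc` forces `p = 1`, i.e. `c = a`. A braid relation between commuting elements makes them
equal, so `d = c` and then `b = a`, and all generators agree in `B_n / N`. The quotient is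
therefore cyclic, `B'_n ≤ N`, and `N = B'_n`.
-/

section BraidRelations

variable {G : Type*} [Group G] {a b c d : G}

theorem eq_of_braid_of_commute_s6 (h : a * b * a = b * a * b) (hc : Commute a b) : a = b :=
  mul_left_cancel (by rw [h, ← hc.eq] : a * b * a = a * b * b)

theorem conj_conj_eq_inv_of_commute {g x p : G} (hg : Commute g p) (hx : x * p * x⁻¹ = p⁻¹) :
    (g * x * g⁻¹) * p * (g * x * g⁻¹)⁻¹ = p⁻¹ := by
  calc (g * x * g⁻¹) * p * (g * x * g⁻¹)⁻¹ = g * (x * (g⁻¹ * p * g) * x⁻¹) * g⁻¹ := by group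
    _ = p⁻¹ := by rw [hg.inv_mul_cancel, hx, hg.inv_right.mul_inv_cancel]

theorem conj_mul_inv_eq_of_braid₃ (hab : a * b * a = b * a * b) (hbc : b * c * b = c * b * c)
    (hac : Commute a c) : (a * b * c) * (b * a⁻¹) * (a * b * c)⁻¹ = c * b⁻¹ := by
  have ha : (a * b * c) * a * (a * b * c)⁻¹ = b := by
    calc (a * b * c) * a * (a * b * c)⁻¹ = a * b * (c * a * c⁻¹) * b⁻¹ * a⁻¹ := by group
      _ = b := by rw [hac.symm.mul_inv_cancel, hab]; group
  have hb : (a * b * c) * b * (a * b * c)⁻¹ = c := by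
    calc (a * b * c) * b * (a * b * c)⁻¹ = a * (b * c * b) * c⁻¹ * b⁻¹ * a⁻¹ := by group
      _ = a * c * a⁻¹ := by rw [hbc]; group
      _ = c := hac.mul_inv_cancel
  calc (a * b * c) * (b * a⁻¹) * (a * b * c)⁻¹
      = ((a * b * c) * b * (a * b * c)⁻¹) * ((a * b * c) * a * (a * b * c)⁻¹)⁻¹ := by group
    _ = c * b⁻¹ := by rw [ha, hb]

theorem conj_mul_inv_eq_mul_conj_of_braid (hab : a * b * a = b * a * b) :
    a * (b * a⁻¹) * a⁻¹ = b * a⁻¹ * (a * a * (b * a⁻¹) * (a * a)⁻¹) :=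
  calc a * (b * a⁻¹) * a⁻¹ = a * b * a * (a * a * a)⁻¹ := by group
    _ = b * a * b * (a * a * a)⁻¹ := by rw [hab]
    _ = _ := by group

theorem mul_inv_mul_conj_eq_of_braid (hbc : b * c * b = c * b * c) (hac : Commute a c) :
    b * a⁻¹ * (c * a⁻¹) * (a * a * (b * a⁻¹) * (a * a)⁻¹) =
      c * a⁻¹ * (a * (b * a⁻¹) * a⁻¹) * (c * a⁻¹) :=
  calc _ = b * (a⁻¹ * c * a) * b * (a * a * a)⁻¹ := by group
    _ = c * b * ((a * a)⁻¹ * c * (a * a)) * (a * a * a)⁻¹ := by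
      rw [hac.inv_mul_cancel, hbc, (hac.mul_left hac).inv_mul_cancel]
    _ = _ := by group

theorem eq_of_sq_mul_inv_eq_one_of_braid₃ (hab : a * b * a = b * a * b)
    (hbc : b * c * b = c * b * c) (hac : Commute a c) (hu : (b * a⁻¹) ^ 2 = 1) : c = a := by
  have hcb : (c * a⁻¹ * (b * a⁻¹)⁻¹) ^ 2 = 1 := by
    rw [show c * a⁻¹ * (b * a⁻¹)⁻¹ = c * b⁻¹ by group, ← conj_mul_inv_eq_of_braid₃ hab hbc hac,
      conj_pow, hu, mul_one, mul_inv_cancel]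
  have hpa : Commute (c * a⁻¹) a := hac.symm.mul_left (Commute.refl a).inv_left
  have hconj := conj_mul_inv_eq_mul_conj_of_braid hab
  have hR2 := mul_inv_mul_conj_eq_of_braid hbc hac
  rw [← mul_inv_eq_one]
  generalize b * a⁻¹ = u at hu hcb hconj hR2
  generalize c * a⁻¹ = p at hpa hcb hR2 ⊢
  rw [pow_two] at hu hcb
  have hu_inv : u⁻¹ = u := inv_eq_of_mul_eq_one_right hu
  have hu₂ : a * a * u * (a * a)⁻¹ = u * (a * u * a⁻¹) := by
    rw [hconj, ← mul_assoc, hu, one_mul]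
  have hpu : u * p * u⁻¹ = p⁻¹ := by
    refine eq_inv_of_mul_eq_one_right ?_
    calc p * (u * p * u⁻¹) = p * u⁻¹ * (p * u⁻¹) := by nth_rw 1 [← hu_inv]; group
      _ = 1 := hcb
  have hup : Commute u p := by
    have h₁ := conj_conj_eq_inv_of_commute hpa.symm hpu
    have h₂ := conj_conj_eq_inv_of_commute (hpa.symm.mul_left hpa.symm) hpu
    rw [hu₂] at h₂
    have hp_inv : p⁻¹ = p :=
      calc p⁻¹ = u * ((a * u * a⁻¹) * p * (a * u * a⁻¹)⁻¹) * u⁻¹ := by rw [← h₂]; group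
        _ = (u * p * u⁻¹)⁻¹ := by rw [h₁]; group
        _ = p := by rw [hpu, inv_inv]
    exact mul_inv_eq_iff_eq_mul.mp (hpu.trans hp_inv)
  refine left_eq_mul.mp (?_ : p * (a * u * a⁻¹) = p * (a * u * a⁻¹) * p)
  calc p * (a * u * a⁻¹) = p * (u * u) * (a * u * a⁻¹) := by rw [hu, mul_one]
    _ = u * p * (a * a * u * (a * a)⁻¹) := by rw [hu₂, hup.eq]; group
    _ = p * (a * u * a⁻¹) * p := hR2

theorem eq_of_sq_mul_inv_eq_one_of_braid₄ (hab : a * b * a = b * a * b)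
    (hbc : b * c * b = c * b * c) (hcd : c * d * c = d * c * d) (hac : Commute a c)
    (had : Commute a d) (hbd : Commute b d) (hu : (b * a⁻¹) ^ 2 = 1) : b = a := by
  have hca : c = a := eq_of_sq_mul_inv_eq_one_of_braid₃ hab hbc hac hu
  have hcd_eq : c = d := eq_of_braid_of_commute_s6 hcd (hca ▸ had)
  exact (eq_of_braid_of_commute_s6 hab (hca ▸ hcd_eq ▸ hbd).symm).symm

theorem isConj_of_braid (h : a * b * a = b * a * b) : IsConj a b :=
  isConj_iff.mpr ⟨a * b, calc a * b * a * (a * b)⁻¹ = b * a * b * (a * b)⁻¹ := by rw [h]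
    _ = b := by group⟩

end BraidRelations

section Subgroups

variable {G Q : Type*} [Group G] [Group Q]

open Subgroup

theorem mul_inv_mem_commutator_of_isConj {g h : G} (hc : IsConj h g) :
    g * h⁻¹ ∈ commutator G := by
  obtain ⟨k, rfl⟩ := isConj_iff.mp hc
  exact commutatorElement_def k h ▸ commutator_mem_commutator (mem_top k) (mem_top h)

theorem commutator_le_ker_of_eq_on_generators {S : Set G} (hS : closure S = ⊤) (f : G →* Q)
    {q : Q} (hf : ∀ s ∈ S, f s = q) : commutator G ≤ f.ker := by
  have hzpowers (g : G) : f g ∈ zpowers q := by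
    have : closure S ≤ (zpowers q).comap f :=
      (closure_le _).mpr fun s hs => by simp [hf s hs]
    exact this (hS ▸ mem_top g)
  rw [commutator_def, commutator_le]
  intro g _ h _
  obtain ⟨k, hk⟩ := mem_zpowers_iff.mp (hzpowers g)
  obtain ⟨l, hl⟩ := mem_zpowers_iff.mp (hzpowers h)
  rw [MonoidHom.mem_ker, map_commutatorElement, ← hk, ← hl,
    commutatorElement_eq_one_iff_commute]
  exact Commute.zpow_zpow_self q k l

theorem nclIn_eq_normalClosure {H : Subgroup G} [H.Normal] {x : G}
    (hH : H ⊔ centralizer {x} = ⊤) : nclIn H x = normalClosure {x} := by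
  rw [nclIn, normalClosure]
  congr 1
  ext y
  simp only [Group.mem_conjugatesOfSet_iff, Set.mem_singleton_iff, exists_eq_left, isConj_iff,
    Set.mem_ofPred_eq]
  constructor
  · rintro ⟨g, -, rfl⟩
    exact ⟨g, rfl⟩
  · rintro ⟨g, rfl⟩
    obtain ⟨h, hh, k, hk, rfl⟩ := mem_sup_of_normal_left.mp (hH ▸ mem_top g)
    refine ⟨h, hh, ?_⟩
    rw [mul_assoc h k, mem_centralizer_singleton_iff.mp hk]
    group

theorem eq_one_of_nclIn_eq {H : Subgroup G} {x : G} (hH : nclIn H x = H) (q : H →* Q)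
    (hq : ∀ a : H, (a : G) = x → q a = 1) (a : H) : q a = 1 := by
  have hx : x ∈ H := hH ▸ subset_closure ⟨1, one_mem H, by group⟩
  have hle : nclIn H x ≤ q.ker.map H.subtype := by
    refine (closure_le _).mpr ?_
    rintro _ ⟨g, hg, rfl⟩
    refine ⟨⟨g, hg⟩ * ⟨x, hx⟩ * ⟨g, hg⟩⁻¹, ?_, rfl⟩
    rw [SetLike.mem_coe, MonoidHom.mem_ker, map_mul, map_mul, hq ⟨x, hx⟩ rfl, mul_one, map_inv,
      mul_inv_cancel]
  exact (mem_map_iff_mem H.subtype_injective).mp (hle (hH.ge a.2))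

end Subgroups

section BraidGroup

variable {n : ℕ}

theorem sig_eq_of {i : ℕ} (h₁ : 1 ≤ i) (h₂ : i ≤ n - 1) :
    sig n i = PresentedGroup.of ⟨i - 1, by omega⟩ :=
  dif_pos ⟨h₁, h₂⟩

theorem of_eq_sig (j : Fin (n - 1)) : (PresentedGroup.of j : BraidGroup n) = sig n (j + 1) := by
  rw [sig_eq_of (by omega) (by omega)]
  rfl

theorem sig_braid {i : ℕ} (h₁ : 1 ≤ i) (h₂ : i + 1 ≤ n - 1) :
    sig n i * sig n (i + 1) * sig n i = sig n (i + 1) * sig n i * sig n (i + 1) := by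
  rw [sig_eq_of h₁ (by omega), sig_eq_of (by omega) h₂]
  exact PresentedGroup.mk_eq_mk_of_mul_inv_mem (Or.inl ⟨_, _, by simp; omega, rfl⟩)

theorem sig_commute {i j : ℕ} (h₁ : 1 ≤ i) (h₂ : i + 2 ≤ j) (h₃ : j ≤ n - 1) :
    Commute (sig n i) (sig n j) := by
  rw [Commute, SemiconjBy, sig_eq_of h₁ (by omega), sig_eq_of (by omega) h₃]
  exact PresentedGroup.mk_eq_mk_of_mul_inv_mem (Or.inr ⟨_, _, by simp; omega, rfl⟩)

theorem isConj_sig_one_sig {i : ℕ} (h₁ : 1 ≤ i) (h₂ : i ≤ n - 1) :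
    IsConj (sig n 1) (sig n i) := by
  induction i, h₁ using Nat.le_induction with
  | base => rfl
  | succ i hi ih => exact (ih (by omega)).trans (isConj_of_braid (sig_braid hi h₂))

theorem sig_mul_inv_sig_mem_commutator {i j : ℕ} (hi₁ : 1 ≤ i) (hi₂ : i ≤ n - 1)
    (hj₁ : 1 ≤ j) (hj₂ : j ≤ n - 1) : sig n i * (sig n j)⁻¹ ∈ commutator (BraidGroup n) :=
  mul_inv_mem_commutator_of_isConj ((isConj_sig_one_sig hj₁ hj₂).symm.trans
    (isConj_sig_one_sig hi₁ hi₂))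

theorem commutator_sup_centralizer_eq_top (hn : 5 ≤ n) :
    commutator (BraidGroup n) ⊔ Subgroup.centralizer {(sig n 2 * (sig n 1)⁻¹) ^ 2} = ⊤ := by
  have hσ₄ : sig n 4 ∈ Subgroup.centralizer {(sig n 2 * (sig n 1)⁻¹) ^ 2} :=
    Subgroup.mem_centralizer_singleton_iff.mpr <|
      (((sig_commute (by omega) le_rfl (by omega)).symm.mul_right
        (sig_commute le_rfl (by omega) (by omega)).symm.inv_right).pow_right 2).eq
  refine eq_top_iff.mpr fun g _ => PresentedGroup.generated_by _ _ (fun j => ?_) g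
  rw [of_eq_sig, ← inv_mul_cancel_right (sig n (j + 1)) (sig n 4)]
  exact mul_mem (Subgroup.mem_sup_left (sig_mul_inv_sig_mem_commutator
    (by omega) (by omega) (by omega) (by omega))) (Subgroup.mem_sup_right hσ₄)

variable {Q : Type*} [Group Q]

theorem map_sig_eq_map_sig_one (f : BraidGroup n →* Q) (h : f (sig n 2) = f (sig n 1)) {i : ℕ}
    (h₁ : 1 ≤ i) (h₂ : i ≤ n - 1) : f (sig n i) = f (sig n 1) := by
  have hsucc {i : ℕ} (h₁ : 1 ≤ i) (h₂ : i + 1 ≤ n - 1) : f (sig n (i + 1)) = f (sig n i) := by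
    induction i, h₁ using Nat.le_induction with
    | base => exact h
    | succ i hi ih =>
      refine (eq_of_braid_of_commute_s6 ?_ ?_).symm
      · simpa only [map_mul] using congrArg f (sig_braid (by omega) h₂)
      · rw [ih (by omega)]
        exact (sig_commute hi le_rfl h₂).map f
  induction i, h₁ using Nat.le_induction with
  | base => rfl
  | succ i hi ih => rw [hsucc hi h₂, ih (by omega)]

theorem map_sig_two_eq_of_map_sq_eq_one (hn : 5 ≤ n) (f : BraidGroup n →* Q)
    (hf : f ((sig n 2 * (sig n 1)⁻¹) ^ 2) = 1) : f (sig n 2) = f (sig n 1) := by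
  have braid {i : ℕ} (h₁ : 1 ≤ i) (h₂ : i + 1 ≤ n - 1) :=
    congrArg f (sig_braid h₁ h₂)
  have comm {i j : ℕ} (h₁ : 1 ≤ i) (h₂ : i + 2 ≤ j) (h₃ : j ≤ n - 1) :=
    (sig_commute h₁ h₂ h₃).map f
  simp only [map_mul, map_pow, map_inv] at braid hf
  exact eq_of_sq_mul_inv_eq_one_of_braid₄ (braid le_rfl (by omega))
    (braid (by omega) (by omega)) (braid (by omega) (by omega)) (comm le_rfl le_rfl (by omega))
    (comm le_rfl (by omega) (by omega)) (comm (by omega) le_rfl (by omega)) hf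

theorem commutator_le_normalClosure_sq (hn : 5 ≤ n) :
    commutator (BraidGroup n) ≤ Subgroup.normalClosure {(sig n 2 * (sig n 1)⁻¹) ^ 2} := by
  set N := Subgroup.normalClosure {(sig n 2 * (sig n 1)⁻¹) ^ 2}
  have hσ := map_sig_two_eq_of_map_sq_eq_one hn (QuotientGroup.mk' N)
    ((QuotientGroup.eq_one_iff _).mpr (Subgroup.subset_normalClosure rfl))
  rw [← QuotientGroup.ker_mk' N]
  refine commutator_le_ker_of_eq_on_generators (PresentedGroup.closure_range_of _) _
    (q := QuotientGroup.mk' N (sig n 1)) ?_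
  rintro _ ⟨j, rfl⟩
  rw [of_eq_sig]
  exact map_sig_eq_map_sig_one _ hσ (by omega) (by omega)

end BraidGroup

/-- For n ≥ 5, the normal closure in B'_n of (σ₂σ₁⁻¹)² is all of B'_n; equivalently,
any quotient of B'_n killing (σ₂σ₁⁻¹)² is trivial. -/
theorem normalClosure_sq_eq_commutator (n : ℕ) (hn : 5 ≤ n) :
    nclIn (commutator (BraidGroup n)) ((sig n 2 * (sig n 1)⁻¹) ^ 2) =
      commutator (BraidGroup n) ∧
    ∀ {G : Type} [Group G] (q : ↥(commutator (BraidGroup n)) →* G),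
      Function.Surjective q →
      (∀ a : ↥(commutator (BraidGroup n)),
        (a : BraidGroup n) = (sig n 2 * (sig n 1)⁻¹) ^ 2 → q a = 1) →
      ∀ g : G, g = 1 := by
  have hu : (sig n 2 * (sig n 1)⁻¹) ^ 2 ∈ commutator (BraidGroup n) :=
    pow_mem (sig_mul_inv_sig_mem_commutator (by omega) (by omega) le_rfl (by omega)) 2
  have hncl : nclIn (commutator (BraidGroup n)) ((sig n 2 * (sig n 1)⁻¹) ^ 2) =
      commutator (BraidGroup n) := by
    rw [nclIn_eq_normalClosure (commutator_sup_centralizer_eq_top hn)]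
    exact le_antisymm (Subgroup.normalClosure_le_normal (Set.singleton_subset_iff.mpr hu))
      (commutator_le_normalClosure_sq hn)
  refine ⟨hncl, fun q hq hkill g => ?_⟩
  obtain ⟨a, rfl⟩ := hq g
  exact eq_one_of_nclIn_eq hncl q hkill a
end
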